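/- arXiv:2506.13531 — 4 statements merged into one kernel-verified Lean document; each statement's English description precedes it below -/
import Mathlib

section
/- Let Q : ℝ → Matrix(n,n,ℝ) be a continuous function such that for every r ∈ ℝ the matrix Q(r) is orthogonal (Q(r)Q(r)ᵀ = Id) with det Q(r) = 1. Then the map T : ℝⁿ → ℝⁿ defined by T(x) = Q(‖x‖²)·x preserves the standard Gaussian measure on ℝⁿ, i.e., the pushforward of the standard Gaussian measure under T equals the standard Gaussian measure. -/
/-!
Cut `ℝⁿ` into the countably many shells `{x | ⌊c ‖x‖²⌋₊ = m}`. On each shell the map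
`x ↦ Q (m / c) x` is a single orthogonal transformation, which preserves both the standard
Gaussian and the shell, so the map that applies it shell by shell preserves the Gaussian.
As `c → ∞` these maps converge pointwise to `x ↦ Q (‖x‖²) x` by continuity of `Q`, and
almost sure convergence implies convergence in distribution, so the limit map has the same law.
-/

open MeasureTheory ProbabilityTheory Matrix Filter Topology

theorem MeasureTheory.MeasurePreserving.fiberwise {X ι : Type*} [MeasurableSpace X]
    [MeasurableSpace ι] [Countable ι] [MeasurableSingletonClass ι] {μ : Measure X}
    {s : X → ι} (hs : Measurable s) {f : ι → X → X}
    (hf : ∀ i, MeasurePreserving (f i) μ μ) (hsf : ∀ i x, s (f i x) = s x) :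
    MeasurePreserving (fun x => f (s x) x) μ μ := by
  have hg : Measurable fun x => f (s x) x :=
    (measurable_from_prod_countable_left (f := fun p : X × ι => f p.2 p.1)
      fun i => (hf i).measurable).comp (measurable_id.prodMk hs)
  refine ⟨hg, (Measure.ext_iff_of_iUnion_eq_univ (s := fun i => s ⁻¹' {i})
    (Set.iUnion_eq_univ_iff.mpr fun x => ⟨s x, rfl⟩)).mpr fun i => ?_⟩
  have hfib : MeasurableSet (s ⁻¹' {i}) := hs (measurableSet_singleton i)
  have hpre : (fun x => f (s x) x) ⁻¹' (s ⁻¹' {i}) = s ⁻¹' {i} := by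
    ext x; simp [hsf]
  have hpre' : f i ⁻¹' (s ⁻¹' {i}) = s ⁻¹' {i} := by
    ext x; simp [hsf]
  calc (μ.map fun x => f (s x) x).restrict (s ⁻¹' {i})
      = (μ.restrict (s ⁻¹' {i})).map fun x => f (s x) x := by
        rw [Measure.restrict_map hg hfib, hpre]
    _ = (μ.restrict (s ⁻¹' {i})).map (f i) := by
        refine Measure.map_congr ?_
        filter_upwards [ae_restrict_mem hfib] with x hx
        rw [show s x = i from hx]
    _ = μ.restrict (s ⁻¹' {i}) := by
        rw [← hpre', ← Measure.restrict_map (hf i).measurable hfib, hpre', (hf i).map_eq]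

theorem MeasureTheory.Measure.map_eq_of_ae_tendsto {ι Ω E : Type*} {l : Filter ι} [l.NeBot]
    [l.IsCountablyGenerated] [MeasurableSpace Ω] [PseudoEMetricSpace E] [MeasurableSpace E]
    [BorelSpace E] {μ : Measure Ω} [IsProbabilityMeasure μ] {ν : Measure E}
    [IsProbabilityMeasure ν] {X : ι → Ω → E} {Z : Ω → E}
    (hX : ∀ i, MeasurePreserving (X i) μ ν) (hZ : AEMeasurable Z μ)
    (hlim : ∀ᵐ ω ∂μ, Tendsto (fun i => X i ω) l (𝓝 (Z ω))) :
    μ.map Z = ν := by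
  have hXm i : AEMeasurable (X i) μ := (hX i).measurable.aemeasurable
  have hν : TendstoInDistribution X l id (fun _ => μ) ν :=
    { forall_aemeasurable := hXm
      tendsto := by simp_rw [(hX _).map_eq, Measure.map_id]; exact tendsto_const_nhds }
  simpa using tendstoInDistribution_unique X (tendstoInDistribution_of_ae_tendsto hXm hZ hlim) hν

theorem Matrix.sum_sq_mulVec_of_mul_transpose_eq_one {ι : Type*} [Fintype ι] [DecidableEq ι]
    {R : Matrix ι ι ℝ} (hR : R * Rᵀ = 1) (x : ι → ℝ) :
    ∑ i, (R *ᵥ x) i ^ 2 = ∑ i, x i ^ 2 := by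
  have h : (R *ᵥ x) ⬝ᵥ (R *ᵥ x) = x ⬝ᵥ x := by
    rw [dotProduct_mulVec, vecMul_mulVec, mul_eq_one_comm.mp hR, vecMul_one]
  simpa [dotProduct, sq] using h

theorem measurePreserving_mulVec_pi_gaussianReal {ι : Type*} [Fintype ι] [DecidableEq ι]
    {R : Matrix ι ι ℝ} (hR : R * Rᵀ = 1) :
    MeasurePreserving R.mulVec (Measure.pi fun _ : ι => gaussianReal 0 1)
      (Measure.pi fun _ : ι => gaussianReal 0 1) := by
  refine ⟨by fun_prop, ?_⟩
  have hpi : Measure.pi (fun _ : ι => gaussianReal 0 1)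
      = (stdGaussian (EuclideanSpace ℝ ι)).map WithLp.ofLp := by
    rw [← map_pi_eq_stdGaussian, Measure.map_map (by fun_prop) (by fun_prop)]
    exact Measure.map_id.symm
  have hU : toEuclideanCLM (𝕜 := ℝ) R ∈
      unitary (EuclideanSpace ℝ ι →L[ℝ] EuclideanSpace ℝ ι) :=
    Unitary.map_mem _ <| Matrix.mem_unitaryGroup_iff.mpr <| by
      rwa [star_eq_conjTranspose, conjTranspose_eq_transpose_of_trivial]
  let f := Unitary.linearIsometryEquiv ⟨_, hU⟩
  have hcomm : R.mulVec ∘ WithLp.ofLp = WithLp.ofLp ∘ f := by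
    funext x; exact (ofLp_toEuclideanCLM R x).symm
  rw [hpi, Measure.map_map (by fun_prop) (by fun_prop), hcomm,
    ← Measure.map_map (by fun_prop) (by fun_prop), stdGaussian_map]

theorem stmt_7_general (n : ℕ) (Q : ℝ → Matrix (Fin n) (Fin n) ℝ)
    (hQcont : Continuous Q)
    (hQorth : ∀ r, Q r * (Q r)ᵀ = 1) :
    (Measure.pi (fun _ : Fin n => gaussianReal 0 1)).map
        (fun x : Fin n → ℝ => (Q (∑ i, x i ^ 2)).mulVec x)
      = Measure.pi (fun _ : Fin n => gaussianReal 0 1) := by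
  have hsq : Continuous fun x : Fin n → ℝ => ∑ i, x i ^ 2 := by fun_prop
  have hfloor (c : ℝ) : Measurable fun x : Fin n → ℝ => ⌊(∑ i, x i ^ 2) * c⌋₊ :=
    (hsq.measurable.mul_const c).nat_floor
  have happrox (c : ℝ) :
      MeasurePreserving (fun x : Fin n → ℝ => Q (⌊(∑ i, x i ^ 2) * c⌋₊ / c) *ᵥ x)
        (Measure.pi fun _ => gaussianReal 0 1) (Measure.pi fun _ => gaussianReal 0 1) :=
    MeasurePreserving.fiberwise (f := fun m : ℕ => (Q (m / c)).mulVec) (hfloor c)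
      (fun m => measurePreserving_mulVec_pi_gaussianReal (hQorth _))
      (fun m x => by simp only [sum_sq_mulVec_of_mul_transpose_eq_one (hQorth _)])
  refine Measure.map_eq_of_ae_tendsto (l := atTop) happrox
    (((hQcont.comp hsq).matrix_mulVec continuous_id).aemeasurable)
    (ae_of_all _ fun x => ?_)
  have hr := tendsto_nat_floor_mul_div_atTop (R := ℝ) (by positivity : 0 ≤ ∑ i, x i ^ 2)
  exact ((continuous_id.matrix_mulVec continuous_const).tendsto _).comp
    ((hQcont.tendsto _).comp hr)

/-- Norm-dependent rotations preserve the standard Gaussian measure: if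
`Q : ℝ → Matrix (Fin n) (Fin n) ℝ` is continuous with `Q r` special orthogonal
for every `r`, then `T x = Q (‖x‖²) x` (with `‖x‖²` the squared Euclidean norm
`∑ i, x i ^ 2`) pushes the standard Gaussian measure on `ℝⁿ` (the `n`-fold
product of `N(0,1)`) forward to itself. -/
theorem stmt_7 (n : ℕ) (Q : ℝ → Matrix (Fin n) (Fin n) ℝ)
    (hQcont : Continuous Q)
    (hQorth : ∀ r, Q r * (Q r)ᵀ = 1) (hQdet : ∀ r, (Q r).det = 1) :
    (Measure.pi (fun _ : Fin n => gaussianReal 0 1)).map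
        (fun x : Fin n → ℝ => (Q (∑ i, x i ^ 2)).mulVec x)
      = Measure.pi (fun _ : Fin n => gaussianReal 0 1) :=
  stmt_7_general n Q hQcont hQorth
end

section
/- Let g : ℝⁿ × ℝⁿ → ℝⁿ, let y_{t−1} ∈ ℝⁿ, δ ∈ ℝⁿ, and let ε_t, ε_{t+1}, ε_{t+2}, … be a sequence in ℝⁿ. Define the baseline path by y_t = g(y_{t−1}, ε_t) and y_{t+h} = g(y_{t+h−1}, ε_{t+h}) for h ≥ 1; define the shocked path by y_t^{(δ)} = g(y_{t−1}, ε_t + δ) and y_{t+h}^{(δ)} = g(y_{t+h−1}^{(δ)}, ε_{t+h}) for h ≥ 1; and define the pseudo-shocked path by y_t^{Δ} = y_t + Δ and y_{t+h}^{Δ} = g(y_{t+h−1}^{Δ}, ε_{t+h}) for h ≥ 1, where Δ = g(y_{t−1}, ε_t + δ) − g(y_{t−1}, ε_t). Then y_{t+h}^{(δ)} = y_{t+h}^{Δ} for all h ≥ 0; consequently IRF_t(h, δ, y_{t−1}) := y_{t+h}^{(δ)} − y_{t+h} equals PIRF_t(h, Δ, y_t) := y_{t+h}^{Δ} − y_{t+h}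 for all h ≥ 0. -/
theorem eq_of_eq_zero_of_forall_succ_eq {α : Type*} (f : ℕ → α → α) {x x' : ℕ → α}
    (hx : ∀ h, x (h + 1) = f h (x h)) (hx' : ∀ h, x' (h + 1) = f h (x' h))
    (h0 : x 0 = x' 0) : x = x' := by
  funext h
  induction h with
  | zero => exact h0
  | succ k ih => rw [hx, hx', ih]

theorem stmt_14_general (n : ℕ) (g : (Fin n → ℝ) → (Fin n → ℝ) → (Fin n → ℝ))
    (ylag : Fin n → ℝ) (δ : Fin n → ℝ) (ε : ℕ → Fin n → ℝ)
    (y yδ yΔ : ℕ → Fin n → ℝ) (Δ : Fin n → ℝ)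
    (hΔ : Δ = g ylag (ε 0 + δ) - g ylag (ε 0))
    (hy0 : y 0 = g ylag (ε 0))
    (hyδ0 : yδ 0 = g ylag (ε 0 + δ))
    (hyδ : ∀ h, yδ (h + 1) = g (yδ h) (ε (h + 1)))
    (hyΔ0 : yΔ 0 = y 0 + Δ)
    (hyΔ : ∀ h, yΔ (h + 1) = g (yΔ h) (ε (h + 1))) :
    (∀ h, yδ h = yΔ h) ∧ (∀ h, yδ h - y h = yΔ h - y h) := by
  have start : yδ 0 = yΔ 0 := by rw [hyδ0, hyΔ0, hy0, hΔ, add_sub_cancel]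
  have paths : yδ = yΔ :=
    eq_of_eq_zero_of_forall_succ_eq (fun h z => g z (ε (h + 1))) hyδ hyΔ start
  exact ⟨congrFun paths, fun h => by rw [paths]⟩

/-- Proposition 7.1: in the nonlinear autoregressive model `y_t = g(y_{t-1}, ε_t)`,
the path shocked by adding `δ` to the innovation at horizon 0 coincides with the
pseudo-shocked path obtained by shifting `y_t` by
`Δ = g(y_{t-1}, ε_t + δ) - g(y_{t-1}, ε_t)`; consequently the IRF equals the
pseudo IRF at every horizon. -/
theorem stmt_14 (n : ℕ) (g : (Fin n → ℝ) → (Fin n → ℝ) → (Fin n → ℝ))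
    (ylag : Fin n → ℝ) (δ : Fin n → ℝ) (ε : ℕ → Fin n → ℝ)
    (y yδ yΔ : ℕ → Fin n → ℝ) (Δ : Fin n → ℝ)
    (hΔ : Δ = g ylag (ε 0 + δ) - g ylag (ε 0))
    (hy0 : y 0 = g ylag (ε 0))
    (hy : ∀ h, y (h + 1) = g (y h) (ε (h + 1)))
    (hyδ0 : yδ 0 = g ylag (ε 0 + δ))
    (hyδ : ∀ h, yδ (h + 1) = g (yδ h) (ε (h + 1)))
    (hyΔ0 : yΔ 0 = y 0 + Δ)
    (hyΔ : ∀ h, yΔ (h + 1) = g (yΔ h) (ε (h + 1))) :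
    (∀ h, yδ h = yΔ h) ∧ (∀ h, yδ h - y h = yΔ h - y h) :=
  stmt_14_general n g ylag δ ε y yδ yΔ Δ hΔ hy0 hyδ0 hyδ hyΔ0 hyΔ
end

section
/- Let (Ω, m₀, P) be a probability space and let 𝒜, ℬ, 𝒞, 𝒟 be sub-σ-algebras of m₀ with 𝒞 ⊆ ℬ and 𝒟 ⊆ ℬ. If 𝒜 and ℬ are conditionally independent given 𝒞 ⊔ 𝒟 (the σ-algebra generated by 𝒞 and 𝒟), and 𝒜 and 𝒟 are conditionally independent given 𝒞, then 𝒜 and ℬ are conditionally independent given 𝒞. -/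
/-!
For `t ∈ 𝒜`, the hypothesis `𝒜 ⟂ 𝒟 | 𝒞` gives `P⟦t | 𝒞 ⊔ 𝒟⟧ = P⟦t | 𝒞⟧`: both sides have the
same integral over every `c ∩ d` with `c ∈ 𝒞`, `d ∈ 𝒟`, and these sets form a π-system generating
`𝒞 ⊔ 𝒟`. Likewise `𝒜 ⟂ ℬ | 𝒞 ⊔ 𝒟` with `𝒞 ⊔ 𝒟 ≤ ℬ` gives `P⟦t | ℬ⟧ = P⟦t | 𝒞 ⊔ 𝒟⟧`. Hence
`P⟦t | ℬ⟧ = P⟦t | 𝒞⟧`, and since `𝒞 ≤ ℬ`, the tower property and pulling out `ℬ`-measurable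
indicators turn this into the product formula `P⟦t ∩ s | 𝒞⟧ = P⟦t | 𝒞⟧ P⟦s | 𝒞⟧` for `s ∈ ℬ`.
-/

open MeasureTheory ProbabilityTheory Set

namespace MeasurableSpace

variable {Ω : Type*} (m₁ m₂ : MeasurableSpace Ω)

lemma isPiSystem_image2_inter_measurableSet :
    IsPiSystem (image2 (· ∩ ·) {s | MeasurableSet[m₁] s} {s | MeasurableSet[m₂] s}) := by
  rintro _ ⟨c₁, hc₁, d₁, hd₁, rfl⟩ _ ⟨c₂, hc₂, d₂, hd₂, rfl⟩ -
  exact ⟨c₁ ∩ c₂, hc₁.inter hc₂, d₁ ∩ d₂, hd₁.inter hd₂, inter_inter_inter_comm _ _ _ _⟩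

lemma generateFrom_image2_inter_measurableSet :
    generateFrom
      (image2 (· ∩ ·) {s | MeasurableSet[m₁] s} {s | MeasurableSet[m₂] s}) = m₁ ⊔ m₂ := by
  refine le_antisymm (generateFrom_le ?_) (sup_le (fun c hc ↦ ?_) fun d hd ↦ ?_)
  · rintro _ ⟨c, hc, d, hd, rfl⟩
    exact (le_sup_left (b := m₂) c hc).inter (le_sup_right (a := m₁) d hd)
  · exact measurableSet_generateFrom ⟨c, hc, univ, .univ, inter_univ c⟩
  · exact measurableSet_generateFrom ⟨univ, .univ, d, hd, univ_inter d⟩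

end MeasurableSpace

namespace ProbabilityTheory

variable {Ω : Type*} {m m' m₁ m₂ mΩ : MeasurableSpace Ω} {μ : Measure Ω} [IsFiniteMeasure μ]
  {s t : Set Ω}

lemma condExp_indicator_inter (hs : MeasurableSet[m] s) (ht : MeasurableSet t) :
    μ⟦s ∩ t | m⟧ =ᵐ[μ] s.indicator (μ⟦t | m⟧) := by
  rw [← indicator_indicator]
  exact condExp_indicator ((integrable_const 1).indicator ht) hs

lemma condExp_indicator_mul_of_stronglyMeasurable {g : Ω → ℝ} (hs : MeasurableSet s)
    (hg : StronglyMeasurable[m] g) (hgi : Integrable g μ) :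
    μ[s.indicator g | m] =ᵐ[μ] μ⟦s | m⟧ * g := by
  have h : s.indicator g = s.indicator (fun _ ↦ (1 : ℝ)) * g := by
    ext x; by_cases hx : x ∈ s <;> simp [hx]
  rw [h]
  exact condExp_mul_of_stronglyMeasurable_right hg (h ▸ hgi.indicator hs)
    ((integrable_const 1).indicator hs)

lemma setIntegral_condExp_indicator_of_ae_eq_mul (hm : m ≤ mΩ) (hs : MeasurableSet s)
    (hts : μ⟦t ∩ s | m⟧ =ᵐ[μ] μ⟦t | m⟧ * μ⟦s | m⟧) :
    ∫ x in s, (μ⟦t | m⟧) x ∂μ = ∫ x in s, t.indicator (fun _ ↦ (1 : ℝ)) x ∂μ := by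
  calc ∫ x in s, (μ⟦t | m⟧) x ∂μ
      = ∫ x, (μ[s.indicator (μ⟦t | m⟧) | m]) x ∂μ := by
        rw [integral_condExp hm, integral_indicator hs]
    _ = ∫ x, (μ⟦t ∩ s | m⟧) x ∂μ := by
        refine integral_congr_ae ?_
        filter_upwards [condExp_indicator_mul_of_stronglyMeasurable hs stronglyMeasurable_condExp
          integrable_condExp, hts] with x hx hx'
        rw [hx, hx', Pi.mul_apply, Pi.mul_apply, mul_comm]
    _ = ∫ x in s, t.indicator (fun _ ↦ (1 : ℝ)) x ∂μ := by
        rw [integral_condExp hm, inter_comm, ← indicator_indicator, integral_indicator hs]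

section CondIndep

variable [StandardBorelSpace Ω] {hm' : m' ≤ mΩ}

lemma CondIndep.condIndep_sup_right (hm₁ : m₁ ≤ mΩ) (hm₂ : m₂ ≤ mΩ)
    (h : CondIndep m' m₁ m₂ hm' μ) : CondIndep m' m₁ (m' ⊔ m₂) hm' μ := by
  rw [condIndep_iff _ _ _ hm' hm₁ hm₂] at h
  refine CondIndepSets.condIndep hm₁ (sup_le hm' hm₂)
    (@MeasurableSpace.isPiSystem_measurableSet Ω m₁)
    (MeasurableSpace.isPiSystem_image2_inter_measurableSet m' m₂)
    (@MeasurableSpace.generateFrom_measurableSet Ω m₁).symm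
    (MeasurableSpace.generateFrom_image2_inter_measurableSet m' m₂).symm ?_
  have hcd : ∀ s ∈ image2 (· ∩ ·) {s | MeasurableSet[m'] s} {s | MeasurableSet[m₂] s},
      MeasurableSet s := by
    rintro _ ⟨c, hc, d, hd, rfl⟩
    exact (hm' c hc).inter (hm₂ d hd)
  rw [condIndepSets_iff m' hm' {s | MeasurableSet[m₁] s} _ (fun t ht ↦ hm₁ t ht) hcd]
  rintro t _ ht ⟨c, hc, d, hd, rfl⟩
  have ht' : MeasurableSet t := hm₁ t ht
  calc μ⟦t ∩ (c ∩ d) | m'⟧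
      = μ⟦c ∩ (t ∩ d) | m'⟧ := by rw [inter_left_comm]
    _ =ᵐ[μ] c.indicator (μ⟦t ∩ d | m'⟧) := condExp_indicator_inter hc (ht'.inter (hm₂ d hd))
    _ =ᵐ[μ] c.indicator (μ⟦t | m'⟧ * μ⟦d | m'⟧) := (h t d ht hd).indicator
    _ = μ⟦t | m'⟧ * c.indicator (μ⟦d | m'⟧) := by
        ext x; exact indicator_mul_right c _ _
    _ =ᵐ[μ] μ⟦t | m'⟧ * μ⟦c ∩ d | m'⟧ :=
        (condExp_indicator_inter hc (hm₂ d hd)).symm.mul_left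

lemma CondIndep.condExp_indicator_sup_ae_eq (hm₁ : m₁ ≤ mΩ) (hm₂ : m₂ ≤ mΩ)
    (h : CondIndep m' m₁ m₂ hm' μ) {t : Set Ω} (ht : MeasurableSet[m₁] t) :
    μ⟦t | m' ⊔ m₂⟧ =ᵐ[μ] μ⟦t | m'⟧ := by
  have h' := h.condIndep_sup_right hm₁ hm₂
  rw [condIndep_iff _ _ _ hm' hm₁ (sup_le hm' hm₂)] at h'
  refine (ae_eq_condExp_of_forall_setIntegral_eq (sup_le hm' hm₂)
    ((integrable_const 1).indicator (hm₁ t ht)) (fun s _ _ ↦ integrable_condExp.integrableOn)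
    (fun s hs _ ↦ ?_)
    (stronglyMeasurable_condExp.mono (le_sup_left : m' ≤ m' ⊔ m₂)).aestronglyMeasurable).symm
  exact setIntegral_condExp_indicator_of_ae_eq_mul hm' (sup_le hm' hm₂ s hs) (h' t s ht hs)

lemma condIndep_of_condExp_indicator_ae_eq (hm₁ : m₁ ≤ mΩ) (hm₂ : m₂ ≤ mΩ) (hm'₂ : m' ≤ m₂)
    (h : ∀ t, MeasurableSet[m₁] t → μ⟦t | m₂⟧ =ᵐ[μ] μ⟦t | m'⟧) : CondIndep m' m₁ m₂ hm' μ := by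
  rw [condIndep_iff _ _ _ hm' hm₁ hm₂]
  intro t s ht hs
  have ht' : MeasurableSet t := hm₁ t ht
  calc μ⟦t ∩ s | m'⟧
      =ᵐ[μ] μ[μ⟦s ∩ t | m₂⟧ | m'] := by
        rw [inter_comm]; exact (condExp_condExp_of_le hm'₂ hm₂).symm
    _ =ᵐ[μ] μ[s.indicator (μ⟦t | m'⟧) | m'] := by
        refine condExp_congr_ae ((condExp_indicator_inter hs ht').trans ?_)
        exact (h t ht).indicator
    _ =ᵐ[μ] μ⟦s | m'⟧ * μ⟦t | m'⟧ :=
        condExp_indicator_mul_of_stronglyMeasurable (hm₂ s hs) stronglyMeasurable_condExp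
          integrable_condExp
    _ = μ⟦t | m'⟧ * μ⟦s | m'⟧ := mul_comm _ _

end CondIndep

end ProbabilityTheory

/-- Proposition 10 in conditional-independence form: if `𝒜 ⟂ ℬ | 𝒞 ⊔ 𝒟` and
`𝒜 ⟂ 𝒟 | 𝒞`, where `𝒞 ⊆ ℬ` and `𝒟 ⊆ ℬ`, then `𝒜 ⟂ ℬ | 𝒞`. -/
theorem stmt_15 {Ω : Type*} {m0 : MeasurableSpace Ω} [StandardBorelSpace Ω]
    (P : Measure Ω) [IsProbabilityMeasure P]
    (mA mB mC mD : MeasurableSpace Ω)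
    (hA : mA ≤ m0) (hB : mB ≤ m0)
    (hCB : mC ≤ mB) (hDB : mD ≤ mB)
    (hC : mC ≤ m0) (hCD : mC ⊔ mD ≤ m0)
    (h1 : CondIndep (mC ⊔ mD) mA mB hCD P)
    (h2 : CondIndep mC mA mD hC P) :
    CondIndep mC mA mB hC P := by
  refine condIndep_of_condExp_indicator_ae_eq hA hB hCB fun t ht ↦ ?_
  calc P⟦t | mB⟧
      = P⟦t | (mC ⊔ mD) ⊔ mB⟧ := by rw [sup_eq_right.mpr (sup_le hCB hDB)]
    _ =ᵐ[P] P⟦t | mC ⊔ mD⟧ := h1.condExp_indicator_sup_ae_eq hA hB ht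
    _ =ᵐ[P] P⟦t | mC⟧ := h2.condExp_indicator_sup_ae_eq hA (hDB.trans hB) ht
end

section
/- Let T be a real 2×2 matrix such that for every u ∈ [0,1]², the vector Tu belongs to [0,1]², and suppose det T = 1. Then T is the identity matrix. -/
/-!
Testing the map on the basis vectors and on the all-ones vector shows that `T` has nonnegative
entries and row sums at most one. For `T = !![a, b; c, d]` this gives `a, d ≤ 1`, so
`1 + b * c = a * d ≤ 1` with `b * c ≥ 0`; hence `a * d = 1`, which forces `a = d = 1`, and then
the row sums force `b = c = 0`.
-/

open Matrix

section UnitCube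

variable {ι : Type*} [Fintype ι] {T : Matrix ι ι ℝ}

theorem Matrix.nonneg_of_mapsTo_unitCube [DecidableEq ι]
    (hmaps : ∀ u : ι → ℝ, (∀ i, u i ∈ Set.Icc (0 : ℝ) 1) → ∀ i, T.mulVec u i ∈ Set.Icc (0 : ℝ) 1)
    (i j : ι) : 0 ≤ T i j := by
  have hsingle : ∀ k, (Pi.single j 1 : ι → ℝ) k ∈ Set.Icc (0 : ℝ) 1 := fun k => by
    rcases eq_or_ne k j with rfl | hk <;> simp [*]
  simpa [mulVec_single_one] using (hmaps _ hsingle i).1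

theorem Matrix.sum_row_le_one_of_mapsTo_unitCube
    (hmaps : ∀ u : ι → ℝ, (∀ i, u i ∈ Set.Icc (0 : ℝ) 1) → ∀ i, T.mulVec u i ∈ Set.Icc (0 : ℝ) 1)
    (i : ι) : ∑ j, T i j ≤ 1 := by
  simpa [mulVec, dotProduct] using (hmaps 1 (fun _ => by simp) i).2

end UnitCube

theorem Matrix.eq_one_of_nonneg_of_sum_row_le_one_of_det_eq_one (T : Matrix (Fin 2) (Fin 2) ℝ)
    (hnonneg : ∀ i j, 0 ≤ T i j) (hrow : ∀ i, ∑ j, T i j ≤ 1) (hdet : T.det = 1) : T = 1 := by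
  rw [det_fin_two] at hdet
  simp only [Fin.sum_univ_two] at hrow
  have h₀₀ : T 0 0 ≤ 1 := by linarith [hrow 0, hnonneg 0 1]
  have h₁₁ : T 1 1 ≤ 1 := by linarith [hrow 1, hnonneg 1 0]
  have hdiag : T 0 0 * T 1 1 = 1 :=
    le_antisymm (mul_le_one₀ h₀₀ (hnonneg 1 1) h₁₁)
      (by linarith [mul_nonneg (hnonneg 0 1) (hnonneg 1 0)])
  have ha : T 0 0 = 1 := by nlinarith [hnonneg 0 0, hnonneg 1 1]
  have hd : T 1 1 = 1 := by nlinarith [hnonneg 0 0, hnonneg 1 1]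
  have hb : T 0 1 = 0 := by linarith [hrow 0, hnonneg 0 1]
  have hc : T 1 0 = 0 := by linarith [hrow 1, hnonneg 1 0]
  rw [eta_fin_two T, ha, hb, hc, hd, one_fin_two]

/-- The identity is the only linear transformation mapping the unit square into
itself with determinant equal to one. -/
theorem stmt_17 (T : Matrix (Fin 2) (Fin 2) ℝ)
    (hmaps : ∀ u : Fin 2 → ℝ, (∀ i, u i ∈ Set.Icc (0 : ℝ) 1) →
      ∀ i, T.mulVec u i ∈ Set.Icc (0 : ℝ) 1)
    (hdet : T.det = 1) :
    T = 1 :=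
  T.eq_one_of_nonneg_of_sum_row_le_one_of_det_eq_one
    (T.nonneg_of_mapsTo_unitCube hmaps)
    (T.sum_row_le_one_of_mapsTo_unitCube hmaps) hdet
end
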